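/- Let p be an odd prime, v ∈ ℚ_p a p-adic unit that is not a square in ℚ_p, A = diag(1, -v, p), Q_+(x) = xᵀAx, and SO(3)_p = {L ∈ M₃(ℚ_p) : LᵀAL = A, det L = 1}. Then for any two nonzero vectors x, y ∈ ℚ_p³ with Q_+(x) = Q_+(y), there exists L ∈ SO(3)_p with L x = y. -/

import Mathlib

/-!
Over any field, let `Q(z) = zᵀ A z` with `A` symmetric be anisotropic. If `x ≠ y` and
`Q x = Q y`, the reflection in `x - y` (which is nonisotropic) maps `x` to `y`; composing it with
the reflection in a vector `A`-orthogonal to `x` gives an isometry of determinant `1` that still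
maps `x` to `y`. So it suffices that `x₁² - v x₂² + p x₃²` is anisotropic over `ℚ_p`: since `v` is
a nonsquare unit, Hensel's lemma gives `|a² - v b²| = max(|a|, |b|)²`, an even power of `p`,
while `|p c²|` is an odd power.
-/

open Matrix Polynomial

namespace Matrix

variable {n K : Type*} [Fintype n] [Field K]

lemma exists_ne_zero_dotProduct_eq_zero (hn : 1 < Fintype.card n) (a : n → K) :
    ∃ w ≠ 0, a ⬝ᵥ w = 0 := by
  have hker : LinearMap.ker (of ![a]).mulVecLin ≠ ⊥ :=
    LinearMap.ker_ne_bot_of_finrank_lt (by simpa using hn)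
  obtain ⟨w, hw, hw0⟩ := Submodule.exists_mem_ne_zero_of_ne_bot hker
  exact ⟨w, hw0, by simpa [mulVec] using congrFun (LinearMap.mem_ker.mp hw) 0⟩

variable [DecidableEq n]

noncomputable def reflection (A : Matrix n n K) (w : n → K) : Matrix n n K :=
  1 - (2 / (w ⬝ᵥ A *ᵥ w)) • vecMulVec w (w ᵥ* A)

lemma reflection_mulVec (A : Matrix n n K) (w u : n → K) :
    reflection A w *ᵥ u = u - (2 / (w ⬝ᵥ A *ᵥ w) * (w ⬝ᵥ A *ᵥ u)) • w := by
  rw [reflection, sub_mulVec, one_mulVec, smul_mulVec, vecMulVec_mulVec, ← dotProduct_mulVec,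
    op_smul_eq_smul, smul_smul]

lemma det_reflection (A : Matrix n n K) {w : n → K} (hw : w ⬝ᵥ A *ᵥ w ≠ 0) :
    (reflection A w).det = -1 := by
  rw [reflection, sub_eq_add_neg, ← neg_smul, ← smul_vecMulVec, vecMulVec_eq Unit,
    det_one_add_replicateCol_mul_replicateRow, dotProduct_smul, smul_eq_mul, ← dotProduct_mulVec,
    neg_mul, div_mul_cancel₀ 2 hw]
  norm_num

lemma transpose_mul_mul_reflection {A : Matrix n n K} (hA : Aᵀ = A) {w : n → K}
    (hw : w ⬝ᵥ A *ᵥ w ≠ 0) : (reflection A w)ᵀ * A * reflection A w = A := by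
  have hwA : w ᵥ* A = A *ᵥ w := by rw [← vecMul_transpose, hA]
  have hP : vecMulVec (A *ᵥ w) w * A * vecMulVec w (A *ᵥ w) =
      (w ⬝ᵥ A *ᵥ w) • vecMulVec (A *ᵥ w) (A *ᵥ w) := by
    rw [vecMulVec_mul, hwA, vecMulVec_mul_vecMulVec, dotProduct_comm, vecMulVec_smul]
  simp only [reflection, hwA, transpose_sub, transpose_one, transpose_smul, transpose_vecMulVec,
    sub_mul, mul_sub, one_mul, mul_one, smul_mul_assoc, mul_smul_comm]
  rw [hP, smul_smul, div_mul_cancel₀ 2 hw, vecMulVec_mul, mul_vecMulVec, hwA]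
  module

lemma reflection_mulVec_of_dotProduct_eq_zero (A : Matrix n n K) {w u : n → K}
    (h : w ⬝ᵥ A *ᵥ u = 0) : reflection A w *ᵥ u = u := by
  rw [reflection_mulVec, h, mul_zero, zero_smul, sub_zero]

lemma reflection_sub_mulVec {A : Matrix n n K} (hA : Aᵀ = A) {x y : n → K}
    (hxy : x ⬝ᵥ A *ᵥ x = y ⬝ᵥ A *ᵥ y) (hd : (x - y) ⬝ᵥ A *ᵥ (x - y) ≠ 0) :
    reflection A (x - y) *ᵥ x = y := by
  have hsymm : y ⬝ᵥ A *ᵥ x = x ⬝ᵥ A *ᵥ y := by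
    rw [dotProduct_mulVec, ← mulVec_transpose, hA, dotProduct_comm]
  have hQd : (x - y) ⬝ᵥ A *ᵥ (x - y) = 2 * ((x - y) ⬝ᵥ A *ᵥ x) := by
    simp only [mulVec_sub, sub_dotProduct, dotProduct_sub, hsymm, hxy]
    ring
  have hB : (x - y) ⬝ᵥ A *ᵥ x ≠ 0 := fun h => hd (by rw [hQd, h, mul_zero])
  rw [reflection_mulVec, hQd, div_mul_eq_div_div, div_mul_cancel₀ _ hB,
    div_self (left_ne_zero_of_mul (hQd ▸ hd)), one_smul, sub_sub_cancel]

theorem exists_isometry_det_one_mulVec_eq {A : Matrix n n K} (hA : Aᵀ = A)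
    (hanis : ∀ z, z ⬝ᵥ A *ᵥ z = 0 → z = 0) (hn : 1 < Fintype.card n) {x y : n → K}
    (hxy : x ⬝ᵥ A *ᵥ x = y ⬝ᵥ A *ᵥ y) :
    ∃ L : Matrix n n K, Lᵀ * A * L = A ∧ L.det = 1 ∧ L *ᵥ x = y := by
  rcases eq_or_ne x y with rfl | hne
  · exact ⟨1, by simp, det_one, one_mulVec x⟩
  have hd : (x - y) ⬝ᵥ A *ᵥ (x - y) ≠ 0 := fun h => sub_ne_zero.mpr hne (hanis _ h)
  -- a second reflection, fixing `x`, corrects the determinant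
  obtain ⟨w, hw0, hwx⟩ := exists_ne_zero_dotProduct_eq_zero hn (A *ᵥ x)
  have hw : w ⬝ᵥ A *ᵥ w ≠ 0 := fun h => hw0 (hanis w h)
  have hwx' : w ⬝ᵥ A *ᵥ x = 0 := by rw [dotProduct_comm, ← hwx]
  refine ⟨reflection A (x - y) * reflection A w, ?_, ?_, ?_⟩
  · calc (reflection A (x - y) * reflection A w)ᵀ * A * (reflection A (x - y) * reflection A w)
        = (reflection A w)ᵀ * ((reflection A (x - y))ᵀ * A * reflection A (x - y)) *
            reflection A w := by simp only [transpose_mul, Matrix.mul_assoc]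
      _ = A := by rw [transpose_mul_mul_reflection hA hd, transpose_mul_mul_reflection hA hw]
  · rw [det_mul, det_reflection A hd, det_reflection A hw, neg_one_mul, neg_neg]
  · rw [← mulVec_mulVec, reflection_mulVec_of_dotProduct_eq_zero A hwx',
      reflection_sub_mulVec hA hxy hd]

end Matrix

namespace PadicInt

variable {p : ℕ} [Fact p.Prime]

lemma isSquare_of_norm_sq_sub_lt_one (hp : p ≠ 2) {t u : ℤ_[p]} (ht : ‖t‖ = 1)
    (h : ‖t ^ 2 - u‖ < 1) : IsSquare u := by
  have h2 : ‖((2 : ℕ) : ℤ_[p])‖ = 1 := norm_natCast_eq_one_iff.mpr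
    ((Nat.coprime_primes Fact.out Nat.prime_two).mpr hp)
  have hderiv : ‖(X ^ 2 - C u : ℤ_[p][X]).derivative.aeval t‖ = 1 := by
    simpa [derivative_X_pow, norm_mul, ht, one_add_one_eq_two] using h2
  obtain ⟨z, hz, -⟩ :=
    hensels_lemma (F := X ^ 2 - C u) (a := t) (by rw [hderiv, one_pow]; simpa using h)
  exact ⟨z, by simpa [sub_eq_zero, sq, eq_comm] using hz⟩

end PadicInt

namespace Padic

variable {p : ℕ} [Fact p.Prime]

lemma norm_sq_sub_mul_sq (hp : p ≠ 2) {v : ℚ_[p]} (hv : ‖v‖ = 1) (hvsq : ¬IsSquare v)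
    (a b : ℚ_[p]) : ‖a ^ 2 - v * b ^ 2‖ = max (‖a‖ ^ 2) (‖b‖ ^ 2) := by
  rcases eq_or_ne ‖a‖ ‖b‖ with hab | hab
  · rcases eq_or_ne b 0 with rfl | hb
    · simp_all
    have ht : ‖a / b‖ = 1 := by rw [norm_div, hab, div_self (norm_ne_zero_iff.mpr hb)]
    set t : ℤ_[p] := ⟨a / b, ht.le⟩
    set u : ℤ_[p] := ⟨v, hv.le⟩
    have htu : ‖t ^ 2 - u‖ = 1 := le_antisymm (PadicInt.norm_le_one _) <| not_lt.mp fun hlt =>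
      hvsq ((PadicInt.isSquare_of_norm_sq_sub_lt_one hp ht hlt).map PadicInt.Coe.ringHom)
    calc ‖a ^ 2 - v * b ^ 2‖ = ‖((t ^ 2 - u : ℤ_[p]) : ℚ_[p]) * b ^ 2‖ := by
          rw [PadicInt.coe_sub, PadicInt.coe_pow, sub_mul, div_pow,
            div_mul_cancel₀ _ (pow_ne_zero 2 hb)]
      _ = max (‖a‖ ^ 2) (‖b‖ ^ 2) := by
          rw [norm_mul, ← PadicInt.norm_def, htu, one_mul, norm_pow, hab, max_self]
  · have hne : ‖a ^ 2‖ ≠ ‖-(v * b ^ 2)‖ := by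
      rw [norm_neg, norm_mul, hv, one_mul, norm_pow, norm_pow]
      exact fun h => hab ((pow_left_inj₀ (norm_nonneg a) (norm_nonneg b) two_ne_zero).mp h)
    rw [sub_eq_add_neg, add_eq_max_of_ne hne, norm_neg, norm_mul, hv, one_mul, norm_pow, norm_pow]

lemma norm_sq_ne_norm_p_mul_sq (u : ℚ_[p]) {c : ℚ_[p]} (hc : c ≠ 0) :
    ‖u ^ 2‖ ≠ ‖(p : ℚ_[p]) * c ^ 2‖ := by
  have hp0 : (p : ℚ_[p]) ≠ 0 := Nat.cast_ne_zero.mpr (Fact.out : p.Prime).ne_zero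
  have hpc : (p : ℚ_[p]) * c ^ 2 ≠ 0 := mul_ne_zero hp0 (pow_ne_zero 2 hc)
  rcases eq_or_ne u 0 with rfl | hu
  · simpa [eq_comm] using hpc
  have hp1 : (1 : ℝ) < p := by exact_mod_cast (Fact.out : p.Prime).one_lt
  rw [norm_eq_zpow_neg_valuation (pow_ne_zero 2 hu), norm_eq_zpow_neg_valuation hpc,
    Ne, zpow_right_inj₀ (by positivity) hp1.ne', valuation_mul hp0 (pow_ne_zero 2 hc),
    valuation_p, valuation_pow, valuation_pow]
  -- `2 v(u) ≠ 1 + 2 v(c)`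
  omega

lemma eq_zero_of_sq_sub_mul_sq_add_p_mul_sq_eq_zero (hp : p ≠ 2) {v : ℚ_[p]} (hv : ‖v‖ = 1)
    (hvsq : ¬IsSquare v) {a b c : ℚ_[p]} (h : a ^ 2 - v * b ^ 2 + p * c ^ 2 = 0) :
    a = 0 ∧ b = 0 ∧ c = 0 := by
  have hnorm : max (‖a‖ ^ 2) (‖b‖ ^ 2) = ‖(p : ℚ_[p]) * c ^ 2‖ := by
    rw [← norm_sq_sub_mul_sq hp hv hvsq, eq_neg_of_add_eq_zero_left h, norm_neg]
  rcases eq_or_ne c 0 with rfl | hc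
  · have hmax : max (‖a‖ ^ 2) (‖b‖ ^ 2) ≤ 0 := by simpa using hnorm.le
    simpa using max_le_iff.mp hmax
  · rcases max_choice (‖a‖ ^ 2) (‖b‖ ^ 2) with hmax | hmax <;> rw [hmax, ← norm_pow] at hnorm
    exacts [absurd hnorm (norm_sq_ne_norm_p_mul_sq a hc),
      absurd hnorm (norm_sq_ne_norm_p_mul_sq b hc)]

end Padic

theorem so3p_transitive_on_level_sets_general
    (p : ℕ) [Fact p.Prime] (hp : p ≠ 2)
    (v : ℚ_[p]) (hv : ‖v‖ = 1) (hvsq : ¬ IsSquare v)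
    (A : Matrix (Fin 3) (Fin 3) ℚ_[p])
    (hA : A = Matrix.diagonal ![1, -v, (p : ℚ_[p])])
    (Q : (Fin 3 → ℚ_[p]) → ℚ_[p]) (hQ : ∀ z, Q z = z ⬝ᵥ A.mulVec z)
    (x y : Fin 3 → ℚ_[p])
    (hxy : Q x = Q y) :
    ∃ L : Matrix (Fin 3) (Fin 3) ℚ_[p], Lᵀ * A * L = A ∧ L.det = 1 ∧
      L.mulVec x = y := by
  have hQA (z : Fin 3 → ℚ_[p]) : z ⬝ᵥ A *ᵥ z = z 0 ^ 2 - v * z 1 ^ 2 + p * z 2 ^ 2 := by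
    simp [hA, dotProduct, mulVec, diagonal_apply, Fin.sum_univ_three]
    ring
  have hanis (z : Fin 3 → ℚ_[p]) (hz : z ⬝ᵥ A *ᵥ z = 0) : z = 0 := by
    obtain ⟨h0, h1, h2⟩ :=
      Padic.eq_zero_of_sq_sub_mul_sq_add_p_mul_sq_eq_zero hp hv hvsq (hQA z ▸ hz)
    ext i
    fin_cases i <;> assumption
  exact exists_isometry_det_one_mulVec_eq (by rw [hA, diagonal_transpose]) hanis (by simp)
    (by rw [← hQ, ← hQ, hxy])

/-- The action of `SO(3)_p` is transitive on the level sets of `Q₊`: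
for any two nonzero vectors `x, y` with `Q₊(x) = Q₊(y)` there is `L ∈ SO(3)_p`
with `L x = y`. -/
theorem so3p_transitive_on_level_sets
    (p : ℕ) [Fact p.Prime] (hp : p ≠ 2)
    (v : ℚ_[p]) (hv : ‖v‖ = 1) (hvsq : ¬ IsSquare v)
    (A : Matrix (Fin 3) (Fin 3) ℚ_[p])
    (hA : A = Matrix.diagonal ![1, -v, (p : ℚ_[p])])
    (Q : (Fin 3 → ℚ_[p]) → ℚ_[p]) (hQ : ∀ z, Q z = z ⬝ᵥ A.mulVec z)
    (x y : Fin 3 → ℚ_[p]) (hx : x ≠ 0) (hy : y ≠ 0)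
    (hxy : Q x = Q y) :
    ∃ L : Matrix (Fin 3) (Fin 3) ℚ_[p], Lᵀ * A * L = A ∧ L.det = 1 ∧
      L.mulVec x = y :=
  so3p_transitive_on_level_sets_general p hp v hv hvsq A hA Q hQ x y hxy
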